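/- Span decomposition of the trained parameters: in the analogical-reasoning training (any of the layer-wise gradient-descent schedules on datasets built from S₁, S₂, S₃), for every iteration t, every i ∈ [N], every k ∈ [d], l, h ∈ [m] and q ∈ {1,2}, there exist real coefficients γ^(t)_{i,k,l}, ρ^(t)_{i,k,l}, ζ^(t)_{q,k,l}, β^(t)_{1,k,l,q,h}, β^(t)_{2,k,l,j}, β^(t)_{3,k,l,j}, β^(t)_{4,k,l,q} such that V^(t)a_i = Σ_{k,l} γ^(t)_{i,k,l} w⁽⁰⁾_{k,l} + V⁽⁰⁾a_i, V^(t)a'_i = Σ_{k,l} ρ^(t)_{i,k,l} w⁽⁰⁾_{k,l} + V⁽⁰⁾a'_i, V^(t)r_q = Σ_{k,l} ζ^(t)_{q,k,l} w⁽⁰⁾_{k,l} + V⁽⁰⁾r_q, and w^(t)_{k,l} = Σ_{q,h} β^(t)_{1,k,l,q,h} w⁽⁰⁾_{q,h} + Σ_{j=1}^N β^(t)_{2,k,l,j} V⁽⁰⁾a_j + Σ_{j=1}^N β^(t)_{3,k,l,j} V⁽⁰⁾a'_j + Σ_{q∈[2]} β^(t)_{4,k,l,q} V⁽⁰⁾r_q;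 i.e., every parameter update remains in the linear span of the initialization vectors. -/

import Mathlib

open MeasureTheory ProbabilityTheory Real
open scoped RealInnerProductSpace ENNReal

noncomputable section

/-- Vectors in `ℝ^d`. -/
abbrev Vec (d : ℕ) := EuclideanSpace ℝ (Fin d)
/-- `d × d` matrices, viewed as a Euclidean (Hilbert) space so that gradients make sense. -/
abbrev Mat (d : ℕ) := EuclideanSpace ℝ (Fin d × Fin d)
/-- Feature-layer parameters `W = (w_{k,l})_{k ∈ [d], l ∈ [m]}`, each `w_{k,l} ∈ ℝ^d`. -/
abbrev WMat (d m : ℕ) := EuclideanSpace ℝ ((Fin d × Fin m) × Fin d)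
/-- A training sample: the two token embeddings `X = [x₁ x₂]` and a label `y ∈ [d]`. -/
abbrev Sample (d : ℕ) := (Vec d × Vec d) × Fin d

/-- Softmax of a finite family of scores. -/
def softmax {ι : Type*} [Fintype ι] (s : ι → ℝ) (k : ι) : ℝ :=
  Real.exp (s k) / ∑ j, Real.exp (s j)

/-- Matrix-vector multiplication for `Mat d`. -/
def matVec {d : ℕ} (Z : Mat d) (v : Vec d) : Vec d := WithLp.toLp 2 (fun i => ∑ j, Z (i, j) * v j)

/-- Attention scores `α(Z,X) = softmax(Xᵀ Z x₂ / √d) ∈ ℝ²`. -/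
def attScore {d : ℕ} (Z : Mat d) (x₁ x₂ : Vec d) : Fin 2 → ℝ :=
  softmax (fun j =>
    (∑ i, (if j = 0 then x₁ i else x₂ i) * matVec Z x₂ i) / Real.sqrt d)

/-- `x_a(Z,X) = X α(Z,X)`. -/
def xAttn {d : ℕ} (Z : Mat d) (x₁ x₂ : Vec d) : Vec d :=
  WithLp.toLp 2 (fun i => attScore Z x₁ x₂ 0 * x₁ i + attScore Z x₁ x₂ 1 * x₂ i)

/-- Attention output `o₁(Z,V,X) = V X α(Z,X)`. -/
def attnOut {d : ℕ} (Z V : Mat d) (x₁ x₂ : Vec d) : Vec d := matVec V (xAttn Z x₁ x₂)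

/-- Model output `f(Z,V,W,X) ∈ ℝ^d`, `f_k = (λ/m) Σ_{l=1}^m ⟨w_{k,l}, o₁(Z,V,X)⟩`. -/
def fOut {d m : ℕ} (lam : ℝ) (Z V : Mat d) (W : WMat d m) (x₁ x₂ : Vec d) : Fin d → ℝ :=
  fun k => (lam / (m : ℝ)) * ∑ l : Fin m, ∑ i, W ((k, l), i) * attnOut Z V x₁ x₂ i

/-- Per-sample cross-entropy loss `L(Z,V,W,X,y) = −log softmax(f(Z,V,W,X))_y`. -/
def sampleLoss {d m : ℕ} (lam : ℝ) (Z V : Mat d) (W : WMat d m) (s : Sample d) : ℝ :=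
  - Real.log (softmax (fOut lam Z V W s.1.1 s.1.2) s.2)

/-- Training loss: the average per-sample loss over the (multiset) dataset `data`. -/
def trainLoss {d m : ℕ} (lam : ℝ) {ι : Type*} [Fintype ι]
    (data : ι → Sample d) (Z V : Mat d) (W : WMat d m) : ℝ :=
  (∑ s : ι, sampleLoss lam Z V W (data s)) / (Fintype.card ι : ℝ)

/-- Misclassification: `f_y < max_{k ≠ y} f_k`. -/
def misclass {d m : ℕ} (lam : ℝ) (Z V : Mat d) (W : WMat d m) (s : Sample d) : Prop :=
  ∃ k, k ≠ s.2 ∧ fOut lam Z V W s.1.1 s.1.2 s.2 < fOut lam Z V W s.1.1 s.1.2 k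

/-- Zero-one test error: the average over test samples of the probability (over the
randomness `ω`) that the true-class score is below some other class score. -/
def testErr01 {d m : ℕ} {Ω : Type*} [MeasurableSpace Ω] (P : Measure Ω) (lam : ℝ)
    {ι : Type*} [Fintype ι] (data : ι → Ω → Sample d)
    (Z V : Ω → Mat d) (W : Ω → WMat d m) : ℝ :=
  (∑ s : ι, (P {ω | misclass lam (Z ω) (V ω) (W ω) (data s ω)}).toReal) /
    (Fintype.card ι : ℝ)

/-- The layer-wise gradient-descent trajectory: for `t < T₁` (Stage 1 / attention training),
`Z` and `V` are updated by full-batch gradient descent on `data₁` with `W` frozen; for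
`T₁ ≤ t < T₁ + T₂`, only `W` is updated on `data₁`; for `t ≥ T₁ + T₂`, only `W` is updated
on `data₂` (this last phase is used by the sequential curricula). -/
def IsGDTraj {d m : ℕ} {Ω : Type*} (lam η : ℝ) {ι₁ ι₂ : Type*} [Fintype ι₁] [Fintype ι₂]
    (data₁ : Ω → ι₁ → Sample d) (data₂ : Ω → ι₂ → Sample d) (T₁ T₂ : ℕ)
    (ZT VT : ℕ → Ω → Mat d) (WT : ℕ → Ω → WMat d m) : Prop :=
  ∀ ω t,
    (t < T₁ →
      ZT (t + 1) ω = ZT t ω -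
          η • gradient (fun Z => trainLoss lam (data₁ ω) Z (VT t ω) (WT t ω)) (ZT t ω) ∧
      VT (t + 1) ω = VT t ω -
          η • gradient (fun V => trainLoss lam (data₁ ω) (ZT t ω) V (WT t ω)) (VT t ω) ∧
      WT (t + 1) ω = WT t ω) ∧
    (T₁ ≤ t → ZT (t + 1) ω = ZT t ω ∧ VT (t + 1) ω = VT t ω) ∧
    (T₁ ≤ t → t < T₁ + T₂ →
      WT (t + 1) ω = WT t ω -
          η • gradient (fun W => trainLoss lam (data₁ ω) (ZT t ω) (VT t ω) W) (WT t ω)) ∧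
    (T₁ + T₂ ≤ t →
      WT (t + 1) ω = WT t ω -
          η • gradient (fun W => trainLoss lam (data₂ ω) (ZT t ω) (VT t ω) W) (WT t ω))

/-- Index of all scalar initialization entries of `(Z⁰, V⁰, W⁰)`. -/
abbrev InitIdx (d m : ℕ) := (Fin d × Fin d) ⊕ ((Fin d × Fin d) ⊕ ((Fin d × Fin m) × Fin d))

/-- All initialization entries, bundled as one family of real random variables. -/
def initEntries {d m : ℕ} {Ω : Type*} (Z0 V0 : Ω → Mat d) (W0 : Ω → WMat d m) :
    InitIdx d m → Ω → ℝ :=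
  Sum.elim (fun p ω => Z0 ω p) (Sum.elim (fun p ω => V0 ω p) (fun p ω => W0 ω p))

/-- The entries of `Z⁰, V⁰` and of all `w⁰_{k,l}` are i.i.d. `N(0, σ₀²)`. -/
def GaussianInit {d m : ℕ} {Ω : Type*} [MeasurableSpace Ω] (P : Measure Ω) (σ₀ : ℝ)
    (Z0 V0 : Ω → Mat d) (W0 : Ω → WMat d m) : Prop :=
  Measurable Z0 ∧ Measurable V0 ∧ Measurable W0 ∧
  iIndepFun (initEntries Z0 V0 W0) P ∧
  ∀ idx, P.map (initEntries Z0 V0 W0 idx) = gaussianReal 0 (Real.toNNReal (σ₀ ^ 2))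

/-- A family of random vectors drawn as a uniformly random orthonormal system:
it is (surely) orthonormal and its joint law is invariant under every rotation of `ℝ^d`. -/
def RandomOrthonormal {d : ℕ} {Ω : Type*} [MeasurableSpace Ω] (P : Measure Ω)
    {J : Type*} (e : J → Ω → Vec d) : Prop :=
  (∀ j, Measurable (e j)) ∧
  (∀ ω, Orthonormal ℝ (fun j => e j ω)) ∧
  ∀ Q : Vec d ≃ₗᵢ[ℝ] Vec d,
    P.map (fun ω => fun j => Q (e j ω)) = P.map (fun ω => fun j => e j ω)

/-- Condition 1 of the paper, with universal constant `C`. -/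
def Condition1 (C : ℝ) (d N m n : ℕ) (lam σ₀ η δ : ℝ) : Prop :=
  C * max (Real.log (4 * (m : ℝ) * d / δ)) ((m : ℝ) ^ 3 * n * (N : ℝ) ^ 2 / lam ^ 6) ≤ (d : ℝ) ∧
  σ₀ ≤ C⁻¹ * Real.sqrt ((n : ℝ) * m) * Real.log d / ((d : ℝ) * lam) ∧
  η ≤ (C * (N : ℝ) * m * d * σ₀ ^ 2 * Real.log d ^ 2 / lam ^ 2)⁻¹

/-- The bundled family of token embeddings `{a_i, a'_i}_{i=1}^N ∪ {r₁, r₂}`. -/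
def embFam {d N : ℕ} {Ω : Type*} (a a' : Fin N → Ω → Vec d) (r₁ r₂ : Ω → Vec d) :
    (Fin N ⊕ (Fin N ⊕ Fin 2)) → Ω → Vec d :=
  Sum.elim a (Sum.elim a' ![r₁, r₂])

/-- Index type of the multiset `⊎_{k=1}^κ (S₁ ∪ S₂) ⊎ S₃` (its cardinality is `(2κ+1)N`). -/
abbrev JointIdx (κ N : ℕ) := (Fin κ × Fin N) ⊕ ((Fin κ × Fin N) ⊕ Fin N)

/-- The joint training multiset: `κ` copies of `S₁ = {([a_i r₁], I(b_i))}` and of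
`S₂ = {([a'_i r₁], I(b_i))}`, together with one copy of `S₃ = {([a'_i r₂], I(c_i))}`. -/
def jointData {d N : ℕ} (κ : ℕ) (a a' : Fin N → Vec d) (r₁ r₂ : Vec d)
    (Ib Ic : Fin N → Fin d) : JointIdx κ N → Sample d :=
  Sum.elim (fun p => ((a p.2, r₁), Ib p.2))
    (Sum.elim (fun p => ((a' p.2, r₁), Ib p.2)) (fun i => ((a' i, r₂), Ic i)))

/-- the vector `w_{k,l}` inside the stacked feature-layer parameters -/
def wRow {d m : ℕ} (W : WMat d m) (k : Fin d) (l : Fin m) : Vec d := WithLp.toLp 2 (fun p : Fin d => (W ((k, l), p) : ℝ))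

/-! The loss depends on `V` only through the scalars `⟪w_{k,l}, V u⟫ = ⟪w_{k,l} uᵀ, V⟫` and on
`W` only through `⟪w_{k,l}, o⟫`, where `u = X α` and `o = V X α = α₀ V x₁ + α₁ V x₂`. Hence
every gradient lies in the span of these directions: a `V`-gradient maps every vector into
the span of the rows `w_{k,l}`, and every row of a `W`-gradient is a combination of the
attention outputs. In the layer-wise schedule `W = W⁰` while `V` moves and `V` is frozen while
`W` moves, so by induction `V⁽ᵗ⁾x - V⁰x ∈ span {w⁰_{k,l}}` for every `x`, and the rows of `W⁽ᵗ⁾`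
stay in `span {w⁰_{k,l}} + span {V⁰x : x a token}`. -/

theorem gradient_mem_span_of_invariant {F : Type*} [NormedAddCommGroup F]
    [InnerProductSpace ℝ F] [CompleteSpace F] {ι : Type*} [Finite ι] {f : F → ℝ} {x : F}
    (v : ι → F) (hf : ∀ h, (∀ i, ⟪v i, h⟫ = 0) → f (x + h) = f x) :
    gradient f x ∈ Submodule.span ℝ (Set.range v) := by
  set K := Submodule.span ℝ (Set.range v)
  have : FiniteDimensional ℝ K := FiniteDimensional.span_of_finite ℝ (Set.finite_range v)
  have hK : ∀ h ∈ Kᗮ, f (x + h) = f x := fun h hh => hf h fun i =>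
    Submodule.inner_right_of_mem_orthogonal (Submodule.subset_span (Set.mem_range_self i)) hh
  rw [← K.orthogonal_orthogonal, Submodule.mem_orthogonal']
  intro h hh
  by_cases hdiff : DifferentiableAt ℝ f x
  · have hline : (fun t : ℝ => f (x + t • h)) = fun _ => f x :=
      funext fun t => hK _ (Kᗮ.smul_mem t hh)
    rw [inner_gradient_left, ← hdiff.lineDeriv_eq_fderiv, lineDeriv, hline, deriv_const]
  · rw [gradient_eq_zero_of_not_differentiableAt hdiff, inner_zero_left]

lemma real_inner_eq_sum_mul {ι : Type*} [Fintype ι] (x y : EuclideanSpace ℝ ι) :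
    ⟪x, y⟫ = ∑ i, x i * y i := by
  simp [PiLp.inner_apply, mul_comm]

section Coefficients

variable {R M : Type*} [Ring R] [AddCommGroup M] [Module R M] {α β : Type*} [Fintype α]
  [Fintype β]

lemma exists_sum_sum_smul_eq_of_mem_span {f : α → β → M} {v : M}
    (h : v ∈ Submodule.span R (Set.range fun p : α × β => f p.1 p.2)) :
    ∃ c : α → β → R, ∑ a, ∑ b, c a b • f a b = v := by
  obtain ⟨c, rfl⟩ := (Submodule.mem_span_range_iff_exists_fun R).mp h
  exact ⟨fun a b => c (a, b), (Fintype.sum_prod_type fun p => c p • f p.1 p.2).symm⟩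

lemma exists_coeffs_of_mem_span_sup_span_image {E ι : Type*} [Fintype ι] {f : α → β → M}
    {g : E → M} {a a' : ι → E} {r₁ r₂ : E} {w : M}
    (h : w ∈ Submodule.span R (Set.range fun p : α × β => f p.1 p.2) ⊔
      Submodule.span R (g '' (Set.range a ∪ Set.range a' ∪ {r₁, r₂}))) :
    ∃ (c₁ : α → β → R) (c₂ c₃ : ι → R) (c₄ : Fin 2 → R),
      w = ∑ p, ∑ q, c₁ p q • f p q + ∑ j, c₂ j • g (a j) + ∑ j, c₃ j • g (a' j) +
        (c₄ 0 • g r₁ + c₄ 1 • g r₂) := by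
  simp only [Set.image_union, Set.image_insert_eq, Set.image_singleton, ← Set.range_comp,
    Submodule.span_union] at h
  obtain ⟨u, hu, v, hv, rfl⟩ := Submodule.mem_sup.mp h
  obtain ⟨v₁, hv₁, v₂, hv₂, rfl⟩ := Submodule.mem_sup.mp hv
  obtain ⟨v₁₁, hv₁₁, v₁₂, hv₁₂, rfl⟩ := Submodule.mem_sup.mp hv₁
  obtain ⟨c₁, rfl⟩ := exists_sum_sum_smul_eq_of_mem_span hu
  obtain ⟨c₂, rfl⟩ := (Submodule.mem_span_range_iff_exists_fun R).mp hv₁₁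
  obtain ⟨c₃, rfl⟩ := (Submodule.mem_span_range_iff_exists_fun R).mp hv₁₂
  obtain ⟨c₄₀, c₄₁, rfl⟩ := Submodule.mem_span_pair.mp hv₂
  exact ⟨c₁, c₂, c₃, ![c₄₀, c₄₁], by simp [add_assoc]⟩

end Coefficients

section Model

variable {d m : ℕ}

lemma fOut_eq_sum_inner (lam : ℝ) (Z V : Mat d) (W : WMat d m) (x₁ x₂ : Vec d) (k : Fin d) :
    fOut lam Z V W x₁ x₂ k = lam / m * ∑ l, ⟪wRow W k l, attnOut Z V x₁ x₂⟫ := by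
  simp [fOut, real_inner_eq_sum_mul, wRow]

def matVecₗ (x : Vec d) : Mat d →ₗ[ℝ] Vec d where
  toFun M := matVec M x
  map_add' M M' := by ext i; simp [matVec, add_mul, Finset.sum_add_distrib]
  map_smul' c M := by ext i; simp [matVec, Finset.mul_sum, mul_assoc]

def wRowₗ (k : Fin d) (l : Fin m) : WMat d m →ₗ[ℝ] Vec d where
  toFun W := wRow W k l
  map_add' W W' := by ext; simp [wRow]
  map_smul' c W := by ext; simp [wRow]

@[simp] lemma matVecₗ_apply (x : Vec d) (M : Mat d) : matVecₗ x M = matVec M x := rfl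

@[simp] lemma wRowₗ_apply (k : Fin d) (l : Fin m) (W : WMat d m) : wRowₗ k l W = wRow W k l :=
  rfl

def outerMat (w u : Vec d) : Mat d := WithLp.toLp 2 fun p => w p.1 * u p.2

lemma inner_outerMat (w u : Vec d) (H : Mat d) : ⟪outerMat w u, H⟫ = ⟪w, matVec H u⟫ := by
  rw [real_inner_eq_sum_mul, real_inner_eq_sum_mul, Fintype.sum_prod_type]
  simp [matVec, outerMat, Finset.mul_sum, mul_assoc, mul_comm (u _)]

lemma matVec_outerMat (w u x : Vec d) : matVec (outerMat w u) x = ⟪u, x⟫ • w := by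
  ext i
  simp [matVec, outerMat, real_inner_eq_sum_mul, Finset.mul_sum, mul_comm, mul_assoc]

def rowSingle (p : Fin d × Fin m) (o : Vec d) : WMat d m :=
  WithLp.toLp 2 fun q => if q.1 = p then o q.2 else 0

lemma inner_rowSingle (p : Fin d × Fin m) (o : Vec d) (H : WMat d m) :
    ⟪rowSingle p o, H⟫ = ⟪o, wRow H p.1 p.2⟫ := by
  rw [real_inner_eq_sum_mul, real_inner_eq_sum_mul, Fintype.sum_prod_type, Finset.sum_eq_single p]
  · simp [rowSingle, wRow]
  · intro q _ hq
    simp [rowSingle, hq]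
  · simp

lemma wRow_rowSingle (p : Fin d × Fin m) (o : Vec d) (k : Fin d) (l : Fin m) :
    wRow (rowSingle p o) k l = if p = (k, l) then o else 0 := by
  ext i
  by_cases h : p = (k, l) <;> simp [wRow, rowSingle, h, eq_comm]

lemma matVec_xAttn (M Z : Mat d) (x₁ x₂ : Vec d) :
    matVec M (xAttn Z x₁ x₂) =
      attScore Z x₁ x₂ 0 • matVec M x₁ + attScore Z x₁ x₂ 1 • matVec M x₂ := by
  ext i
  simp only [matVec, xAttn, PiLp.add_apply, PiLp.smul_apply, smul_eq_mul, Finset.mul_sum,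
    ← Finset.sum_add_distrib]
  exact Finset.sum_congr rfl fun j _ => by ring

lemma attnOut_mem {K : Submodule ℝ (Vec d)} (Z V : Mat d) {x₁ x₂ : Vec d}
    (h₁ : matVec V x₁ ∈ K) (h₂ : matVec V x₂ ∈ K) : attnOut Z V x₁ x₂ ∈ K := by
  rw [attnOut, matVec_xAttn]
  exact K.add_mem (K.smul_mem _ h₁) (K.smul_mem _ h₂)

variable {ι : Type*} [Fintype ι] (lam : ℝ) (data : ι → Sample d)

lemma trainLoss_congr_fOut {Z Z' V V' : Mat d} {W W' : WMat d m}
    (h : ∀ s, fOut lam Z V W (data s).1.1 (data s).1.2 =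
      fOut lam Z' V' W' (data s).1.1 (data s).1.2) :
    trainLoss lam data Z V W = trainLoss lam data Z' V' W' := by
  simp only [trainLoss, sampleLoss, h]

lemma trainLoss_add_V {Z V H : Mat d} {W : WMat d m}
    (hH : ∀ k l s, ⟪wRow W k l, matVec H (xAttn Z (data s).1.1 (data s).1.2)⟫ = 0) :
    trainLoss lam data Z (V + H) W = trainLoss lam data Z V W := by
  refine trainLoss_congr_fOut lam data fun s => funext fun k => ?_
  simp only [fOut_eq_sum_inner, attnOut, ← matVecₗ_apply, map_add, inner_add_right]
  simp [hH]

lemma trainLoss_add_W {Z V : Mat d} {W H : WMat d m}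
    (hH : ∀ k l s, ⟪wRow H k l, attnOut Z V (data s).1.1 (data s).1.2⟫ = 0) :
    trainLoss lam data Z V (W + H) = trainLoss lam data Z V W := by
  refine trainLoss_congr_fOut lam data fun s => funext fun k => ?_
  simp only [fOut_eq_sum_inner, ← wRowₗ_apply, map_add, inner_add_left]
  simp [hH]

lemma matVec_gradient_trainLoss_V_mem_span (Z V : Mat d) (W : WMat d m) (x : Vec d) :
    matVec (gradient (fun V => trainLoss lam data Z V W) V) x ∈
      Submodule.span ℝ (Set.range fun p : Fin d × Fin m => wRow W p.1 p.2) := by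
  let v (r : (Fin d × Fin m) × ι) : Mat d :=
    outerMat (wRow W r.1.1 r.1.2) (xAttn Z (data r.2).1.1 (data r.2).1.2)
  have hgrad :=
    gradient_mem_span_of_invariant (f := fun V => trainLoss lam data Z V W) (x := V) v
    fun H hH => trainLoss_add_V lam data fun k l s => by
      simpa only [v, inner_outerMat] using hH ((k, l), s)
  refine (Submodule.map_span_le (matVecₗ x) _ _).mpr ?_ ⟨_, hgrad, rfl⟩
  rintro _ ⟨r, rfl⟩
  rw [matVecₗ_apply, matVec_outerMat]
  exact Submodule.smul_mem _ _ (Submodule.subset_span ⟨r.1, rfl⟩)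

lemma wRow_gradient_trainLoss_W_mem_span (Z V : Mat d) (W : WMat d m) (k : Fin d) (l : Fin m) :
    wRow (gradient (fun W => trainLoss lam data Z V W) W) k l ∈
      Submodule.span ℝ (Set.range fun s => attnOut Z V (data s).1.1 (data s).1.2) := by
  let v (r : (Fin d × Fin m) × ι) : WMat d m :=
    rowSingle r.1 (attnOut Z V (data r.2).1.1 (data r.2).1.2)
  have hgrad :=
    gradient_mem_span_of_invariant (f := fun W => trainLoss lam data Z V W) (x := W) v
    fun H hH => trainLoss_add_W lam data fun k l s => by
      rw [real_inner_comm, ← inner_rowSingle (k, l)]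
      exact hH ((k, l), s)
  refine (Submodule.map_span_le (wRowₗ k l) _ _).mpr ?_ ⟨_, hgrad, rfl⟩
  rintro _ ⟨r, rfl⟩
  rw [wRowₗ_apply, wRow_rowSingle]
  split_ifs
  · exact Submodule.subset_span ⟨r.2, rfl⟩
  · exact Submodule.zero_mem _

lemma wRow_gradient_step_mem {K : Submodule ℝ (Vec d)} (η : ℝ) (Z V : Mat d) {W : WMat d m}
    {k : Fin d} {l : Fin m} (hW : wRow W k l ∈ K)
    (hK : ∀ s, matVec V (data s).1.1 ∈ K ∧ matVec V (data s).1.2 ∈ K) :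
    wRow (W - η • gradient (fun W => trainLoss lam data Z V W) W) k l ∈ K := by
  have hgrad : wRow (gradient (fun W => trainLoss lam data Z V W) W) k l ∈ K := by
    refine Submodule.span_le.mpr ?_ (wRow_gradient_trainLoss_W_mem_span lam data Z V W k l)
    rintro _ ⟨s, rfl⟩
    exact attnOut_mem Z V (hK s).1 (hK s).2
  rw [← wRowₗ_apply, map_sub, map_smul, wRowₗ_apply, wRowₗ_apply]
  exact K.sub_mem hW (K.smul_mem η hgrad)

end Model

namespace IsGDTraj

variable {d m : ℕ} {Ω : Type*} {lam η : ℝ} {ι₁ ι₂ : Type*} [Fintype ι₁] [Fintype ι₂]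
  {data₁ : Ω → ι₁ → Sample d} {data₂ : Ω → ι₂ → Sample d} {T₁ T₂ : ℕ}
  {ZT VT : ℕ → Ω → Mat d} {WT : ℕ → Ω → WMat d m}

lemma W_eq_of_le (htraj : IsGDTraj lam η data₁ data₂ T₁ T₂ ZT VT WT) (ω : Ω) :
    ∀ t ≤ T₁, WT t ω = WT 0 ω
  | 0, _ => rfl
  | t + 1, ht => ((htraj ω t).1 ht).2.2.trans (htraj.W_eq_of_le ω t (by omega))

lemma matVec_sub_mem_span (htraj : IsGDTraj lam η data₁ data₂ T₁ T₂ ZT VT WT) (ω : Ω)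
    (x : Vec d) (t : ℕ) :
    matVec (VT t ω) x - matVec (VT 0 ω) x ∈
      Submodule.span ℝ (Set.range fun p : Fin d × Fin m => wRow (WT 0 ω) p.1 p.2) := by
  induction t with
  | zero => simp
  | succ t ih =>
    rcases lt_or_ge t T₁ with ht | ht
    · have hgrad := matVec_gradient_trainLoss_V_mem_span lam (data₁ ω) (ZT t ω) (VT t ω)
        (WT 0 ω) x
      rw [((htraj ω t).1 ht).2.1, htraj.W_eq_of_le ω t ht.le, ← matVecₗ_apply, map_sub,
        map_smul, matVecₗ_apply, matVecₗ_apply, sub_right_comm]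
      exact Submodule.sub_mem _ ih (Submodule.smul_mem _ _ hgrad)
    · rwa [((htraj ω t).2.1 ht).2]

lemma wRow_mem_span (htraj : IsGDTraj lam η data₁ data₂ T₁ T₂ ZT VT WT) (ω : Ω)
    {X : Set (Vec d)} (hX₁ : ∀ s, (data₁ ω s).1.1 ∈ X ∧ (data₁ ω s).1.2 ∈ X)
    (hX₂ : ∀ s, (data₂ ω s).1.1 ∈ X ∧ (data₂ ω s).1.2 ∈ X) (k : Fin d) (l : Fin m) (t : ℕ) :
    wRow (WT t ω) k l ∈
      Submodule.span ℝ (Set.range fun p : Fin d × Fin m => wRow (WT 0 ω) p.1 p.2) ⊔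
        Submodule.span ℝ (matVec (VT 0 ω) '' X) := by
  set S := Submodule.span ℝ (Set.range fun p : Fin d × Fin m => wRow (WT 0 ω) p.1 p.2) ⊔
    Submodule.span ℝ (matVec (VT 0 ω) '' X)
  have hV : ∀ t, ∀ x ∈ X, matVec (VT t ω) x ∈ S := fun t x hx => by
    rw [← sub_add_cancel (matVec (VT t ω) x) (matVec (VT 0 ω) x)]
    exact S.add_mem (Submodule.mem_sup_left (htraj.matVec_sub_mem_span ω x t))
      (Submodule.mem_sup_right (Submodule.subset_span ⟨x, hx, rfl⟩))
  induction t with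
  | zero => exact Submodule.mem_sup_left (Submodule.subset_span ⟨(k, l), rfl⟩)
  | succ t ih =>
    rcases lt_or_ge t T₁ with ht₁ | ht₁
    · rwa [((htraj ω t).1 ht₁).2.2]
    rcases lt_or_ge t (T₁ + T₂) with ht₂ | ht₂
    · rw [(htraj ω t).2.2.1 ht₁ ht₂]
      exact wRow_gradient_step_mem lam (data₁ ω) η _ _ ih
        fun s => ⟨hV t _ (hX₁ s).1, hV t _ (hX₁ s).2⟩
    · rw [(htraj ω t).2.2.2 ht₂]
      exact wRow_gradient_step_mem lam (data₂ ω) η _ _ ih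
        fun s => ⟨hV t _ (hX₂ s).1, hV t _ (hX₂ s).2⟩

end IsGDTraj

theorem span_decomposition_of_trained_parameters_general
    {d N m : ℕ} (lam η : ℝ)
    (a a' : Fin N → Vec d) (r₁ r₂ : Vec d) (Ib Ic : Fin N → Fin d)
    (V0 : Mat d) (W0 : WMat d m) (T₁ T₂ : ℕ)
    {ι₁ ι₂ : Type} [Fintype ι₁] [Fintype ι₂]
    (data₁ : ι₁ → Sample d) (data₂ : ι₂ → Sample d)
    (ZT VT : ℕ → Mat d) (WT : ℕ → WMat d m)
    -- the training datasets are built from S₁, S₂, S₃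
    (hdata₁ : ∀ s, data₁ s ∈
        Set.range (fun i => ((a i, r₁), Ib i)) ∪
        Set.range (fun i => ((a' i, r₁), Ib i)) ∪
        Set.range (fun i => ((a' i, r₂), Ic i)))
    (hdata₂ : ∀ s, data₂ s ∈
        Set.range (fun i => ((a i, r₁), Ib i)) ∪
        Set.range (fun i => ((a' i, r₁), Ib i)) ∪
        Set.range (fun i => ((a' i, r₂), Ic i)))
    -- the layer-wise gradient-descent trajectory
    (hV0 : VT 0 = V0) (hW0 : WT 0 = W0)
    (htraj : IsGDTraj lam η (fun _ : Unit => data₁) (fun _ : Unit => data₂) T₁ T₂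
      (fun t _ => ZT t) (fun t _ => VT t) (fun t _ => WT t)) :
    ∀ t, ∃ (γ ρ : Fin N → Fin d → Fin m → ℝ) (ζ : Fin 2 → Fin d → Fin m → ℝ)
        (β₁ : Fin d → Fin m → Fin d → Fin m → ℝ) (β₂ β₃ : Fin d → Fin m → Fin N → ℝ)
        (β₄ : Fin d → Fin m → Fin 2 → ℝ),
      (∀ i, matVec (VT t) (a i) =
        (∑ k : Fin d, ∑ l : Fin m, γ i k l • wRow W0 k l) + matVec V0 (a i)) ∧
      (∀ i, matVec (VT t) (a' i) =
        (∑ k : Fin d, ∑ l : Fin m, ρ i k l • wRow W0 k l) + matVec V0 (a' i)) ∧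
      (matVec (VT t) r₁ =
        (∑ k : Fin d, ∑ l : Fin m, ζ 0 k l • wRow W0 k l) + matVec V0 r₁) ∧
      (matVec (VT t) r₂ =
        (∑ k : Fin d, ∑ l : Fin m, ζ 1 k l • wRow W0 k l) + matVec V0 r₂) ∧
      (∀ k l, wRow (WT t) k l =
        (∑ q : Fin d, ∑ h : Fin m, β₁ k l q h • wRow W0 q h) +
        (∑ j : Fin N, β₂ k l j • matVec V0 (a j)) +
        (∑ j : Fin N, β₃ k l j • matVec V0 (a' j)) +
        (β₄ k l 0 • matVec V0 r₁ + β₄ k l 1 • matVec V0 r₂)) := by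
  intro t
  subst hV0 hW0
  have htokens : ∀ p ∈ Set.range (fun i => ((a i, r₁), Ib i)) ∪
      Set.range (fun i => ((a' i, r₁), Ib i)) ∪ Set.range (fun i => ((a' i, r₂), Ic i)),
      p.1.1 ∈ Set.range a ∪ Set.range a' ∪ {r₁, r₂} ∧
      p.1.2 ∈ Set.range a ∪ Set.range a' ∪ {r₁, r₂} := by
    rintro _ ((⟨i, rfl⟩ | ⟨i, rfl⟩) | ⟨i, rfl⟩) <;> simp
  have hV x := exists_sum_sum_smul_eq_of_mem_span (htraj.matVec_sub_mem_span () x t)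
  choose γ hγ using fun i => hV (a i)
  choose ρ hρ using fun i => hV (a' i)
  obtain ⟨ζ₁, hζ₁⟩ := hV r₁
  obtain ⟨ζ₂, hζ₂⟩ := hV r₂
  choose β₁ β₂ β₃ β₄ hβ using fun k l => exists_coeffs_of_mem_span_sup_span_image
    (htraj.wRow_mem_span () (fun s => htokens _ (hdata₁ s)) (fun s => htokens _ (hdata₂ s)) k l t)
  exact ⟨γ, ρ, ![ζ₁, ζ₂], β₁, β₂, β₃, β₄, fun i => eq_add_of_sub_eq (hγ i).symm,
    fun i => eq_add_of_sub_eq (hρ i).symm, eq_add_of_sub_eq hζ₁.symm,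
    eq_add_of_sub_eq hζ₂.symm, hβ⟩

/-- **Lemma 2 (Span decomposition of the trained parameters).**
In the analogical-reasoning training (any layer-wise gradient-descent schedule on datasets
whose samples are drawn from `S₁ ∪ S₂ ∪ S₃`), at every iteration `t` the vectors
`V^{(t)}a_i`, `V^{(t)}a'_i`, `V^{(t)}r_q` and `w^{(t)}_{k,l}` are linear combinations of
the initialization vectors `w⁰_{k,l}`, `V⁰a_j`, `V⁰a'_j`, `V⁰r_q` as stated. -/
theorem span_decomposition_of_trained_parameters
    {d N m : ℕ} (lam η : ℝ)
    (a a' : Fin N → Vec d) (r₁ r₂ : Vec d) (Ib Ic : Fin N → Fin d)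
    (Z0 V0 : Mat d) (W0 : WMat d m) (T₁ T₂ : ℕ)
    {ι₁ ι₂ : Type} [Fintype ι₁] [Fintype ι₂]
    (data₁ : ι₁ → Sample d) (data₂ : ι₂ → Sample d)
    (ZT VT : ℕ → Mat d) (WT : ℕ → WMat d m)
    -- the token embeddings form an orthonormal system
    (horth : Orthonormal ℝ (embFam (Ω := Unit) (fun i _ => a i) (fun i _ => a' i)
        (fun _ => r₁) (fun _ => r₂) · ()))
    -- the training datasets are built from S₁, S₂, S₃
    (hdata₁ : ∀ s, data₁ s ∈
        Set.range (fun i => ((a i, r₁), Ib i)) ∪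
        Set.range (fun i => ((a' i, r₁), Ib i)) ∪
        Set.range (fun i => ((a' i, r₂), Ic i)))
    (hdata₂ : ∀ s, data₂ s ∈
        Set.range (fun i => ((a i, r₁), Ib i)) ∪
        Set.range (fun i => ((a' i, r₁), Ib i)) ∪
        Set.range (fun i => ((a' i, r₂), Ic i)))
    -- the layer-wise gradient-descent trajectory
    (hZ0 : ZT 0 = Z0) (hV0 : VT 0 = V0) (hW0 : WT 0 = W0)
    (htraj : IsGDTraj lam η (fun _ : Unit => data₁) (fun _ : Unit => data₂) T₁ T₂
      (fun t _ => ZT t) (fun t _ => VT t) (fun t _ => WT t)) :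
    ∀ t, ∃ (γ ρ : Fin N → Fin d → Fin m → ℝ) (ζ : Fin 2 → Fin d → Fin m → ℝ)
        (β₁ : Fin d → Fin m → Fin d → Fin m → ℝ) (β₂ β₃ : Fin d → Fin m → Fin N → ℝ)
        (β₄ : Fin d → Fin m → Fin 2 → ℝ),
      (∀ i, matVec (VT t) (a i) =
        (∑ k : Fin d, ∑ l : Fin m, γ i k l • wRow W0 k l) + matVec V0 (a i)) ∧
      (∀ i, matVec (VT t) (a' i) =
        (∑ k : Fin d, ∑ l : Fin m, ρ i k l • wRow W0 k l) + matVec V0 (a' i)) ∧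
      (matVec (VT t) r₁ =
        (∑ k : Fin d, ∑ l : Fin m, ζ 0 k l • wRow W0 k l) + matVec V0 r₁) ∧
      (matVec (VT t) r₂ =
        (∑ k : Fin d, ∑ l : Fin m, ζ 1 k l • wRow W0 k l) + matVec V0 r₂) ∧
      (∀ k l, wRow (WT t) k l =
        (∑ q : Fin d, ∑ h : Fin m, β₁ k l q h • wRow W0 q h) +
        (∑ j : Fin N, β₂ k l j • matVec V0 (a j)) +
        (∑ j : Fin N, β₃ k l j • matVec V0 (a' j)) +
        (β₄ k l 0 • matVec V0 r₁ + β₄ k l 1 • matVec V0 r₂)) :=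
  span_decomposition_of_trained_parameters_general lam η a a' r₁ r₂ Ib Ic V0 W0 T₁ T₂ data₁ data₂ ZT
    VT WT hdata₁ hdata₂ hV0 hW0 htraj
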